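/- For every x in the open unit ball B ⊂ ℝ^n (n ≥ 2), the Funk distance from the origin to x, defined as the infimum over all piecewise C¹ curves σ : [0,1] → B with σ(0) = 0 and σ(1) = x of the integral ∫₀¹ F_1(σ(t), σ'(t)) dt, equals −ln(1 − |x|). -/

import Mathlib

open Metric

/-- The Funk metric `F_1` on the unit ball of `ℝ^n`. -/
noncomputable def F1 (n : ℕ) (x y : EuclideanSpace ℝ (Fin n)) : ℝ :=
  (Real.sqrt (‖y‖ ^ 2 - (‖x‖ ^ 2 * ‖y‖ ^ 2 - (inner ℝ x y : ℝ) ^ 2)) + (inner ℝ x y : ℝ)) /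
    (1 - ‖x‖ ^ 2)

/-- A curve `σ : ℝ → ℝ^n` is piecewise `C¹` on `[0,1]` if it is continuous on `[0,1]`
and there is a partition `0 = t₀ < t₁ < ⋯ < t_k = 1` such that `σ` is `C¹` on each
subinterval `[tᵢ, tᵢ₊₁]`. -/
def PiecewiseC1On (n : ℕ) (σ : ℝ → EuclideanSpace ℝ (Fin n)) : Prop :=
  ContinuousOn σ (Set.Icc 0 1) ∧
  ∃ (k : ℕ) (t : Fin (k + 1) → ℝ), StrictMono t ∧ t 0 = 0 ∧ t (Fin.last k) = 1 ∧
    ∀ i : Fin k, ContDiffOn ℝ 1 σ (Set.Icc (t i.castSucc) (t i.succ))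

/-! The function `-log (1 - ‖·‖)` calibrates `F1`: along any curve its right derivative is
`radialSpeed σ σ' / (1 - ‖σ‖)`, and Cauchy–Schwarz bounds this by `F1 σ σ'`. Integrating over the
`C¹` pieces of a curve from `0` to `x` bounds its length below by `-log (1 - ‖x‖)`, and the radial
segment `s ↦ s • x`, along which the two agree, attains the bound. -/

open Set MeasureTheory

section RadialSpeed

variable {E : Type*} [NormedAddCommGroup E] [InnerProductSpace ℝ E]

open scoped Classical in
noncomputable def radialSpeed (v w : E) : ℝ :=
  if v = 0 then ‖w‖ else inner ℝ v w / ‖v‖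

-- At a zero of `f` the norm is only one-sidedly differentiable, with right derivative `‖f'‖`.
theorem HasDerivWithinAt.norm_Ioi {f : ℝ → E} {f' : E} {x : ℝ}
    (hf : HasDerivWithinAt f f' (Ioi x) x) :
    HasDerivWithinAt (‖f ·‖) (radialSpeed (f x) f') (Ioi x) x := by
  by_cases h0 : f x = 0
  · simp only [radialSpeed, h0, if_true]
    rw [hasDerivWithinAt_iff_tendsto_slope] at hf ⊢
    refine hf.norm.congr' ?_
    filter_upwards [self_mem_nhdsWithin] with t ht
    have hxt : 0 < t - x := sub_pos.mpr ht.1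
    simp only [slope, vsub_eq_sub, h0, sub_zero, norm_zero, norm_smul, smul_eq_mul,
      Real.norm_eq_abs, abs_inv, abs_of_pos hxt]
  · have hsq : 0 < ‖f x‖ ^ 2 := by positivity
    have := (Real.hasDerivAt_sqrt hsq.ne').comp_hasDerivWithinAt x hf.norm_sq
    simp only [Function.comp_def, Real.sqrt_sq (norm_nonneg _)] at this
    refine this.congr_deriv ?_
    simp only [radialSpeed, h0, if_false]
    field_simp

theorem HasDerivWithinAt.neg_log_one_sub_norm_Ioi {f : ℝ → E} {f' : E} {x : ℝ}
    (hf : HasDerivWithinAt f f' (Ioi x) x) (hfx : ‖f x‖ ≠ 1) :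
    HasDerivWithinAt (fun t => -Real.log (1 - ‖f t‖)) (radialSpeed (f x) f' / (1 - ‖f x‖))
      (Ioi x) x := by
  have h := ((Real.hasDerivAt_log (sub_ne_zero.mpr hfx.symm)).comp_hasDerivWithinAt x
    (hf.norm_Ioi.const_sub 1)).neg
  exact h.congr_deriv (by ring)

end RadialSpeed

section FunkMetric

variable {n : ℕ}

theorem F1_zero_left (w : EuclideanSpace ℝ (Fin n)) : F1 n 0 w = ‖w‖ := by
  simp [F1, Real.sqrt_sq (norm_nonneg w)]

theorem radialSpeed_div_le_F1 {v : EuclideanSpace ℝ (Fin n)} (w : EuclideanSpace ℝ (Fin n))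
    (hv : ‖v‖ < 1) : radialSpeed v w / (1 - ‖v‖) ≤ F1 n v w := by
  by_cases h0 : v = 0
  · subst h0
    simp [radialSpeed, F1_zero_left]
  simp only [radialSpeed, h0, if_false]
  set r := ‖v‖
  set s := inner ℝ v w
  have hr : 0 < r := norm_pos_iff.mpr h0
  have hr1 : 0 < 1 - r ^ 2 := by nlinarith
  have hcs : s ^ 2 ≤ r ^ 2 * ‖w‖ ^ 2 := by
    rw [← mul_pow, ← sq_abs]
    exact pow_le_pow_left₀ (abs_nonneg _) (abs_real_inner_le_norm v w) 2
  have hroot : |s| / r ≤ Real.sqrt (‖w‖ ^ 2 - (r ^ 2 * ‖w‖ ^ 2 - s ^ 2)) := by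
    refine Real.le_sqrt_of_sq_le ?_
    rw [div_pow, sq_abs, div_le_iff₀ (by positivity)]
    nlinarith [mul_le_mul_of_nonneg_left hcs hr1.le]
  calc s / r / (1 - r) ≤ (|s| / r + s) / (1 - r ^ 2) := by
        rw [div_div, div_add' _ _ _ hr.ne', div_div,
          div_le_div_iff₀ (by nlinarith) (by positivity)]
        -- after clearing denominators this is `r (1 - r) (|s| - s) ≥ 0`
        nlinarith [mul_nonneg (mul_nonneg hr.le (by linarith : 0 ≤ 1 - r))
          (sub_nonneg.mpr (le_abs_self s))]
    _ ≤ F1 n v w := by unfold F1; gcongr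

theorem F1_smul_self (x : EuclideanSpace ℝ (Fin n)) {s : ℝ} (hs : 0 ≤ s) :
    F1 n (s • x) x = ‖x‖ / (1 - s * ‖x‖) := by
  have hpos : 0 < 1 + s * ‖x‖ := by positivity
  rw [F1, real_inner_smul_left, real_inner_self_eq_norm_sq, norm_smul, Real.norm_eq_abs,
    abs_of_nonneg hs,
    show ‖x‖ ^ 2 - ((s * ‖x‖) ^ 2 * ‖x‖ ^ 2 - (s * ‖x‖ ^ 2) ^ 2) = ‖x‖ ^ 2 by ring,
    Real.sqrt_sq (norm_nonneg x), show 1 - (s * ‖x‖) ^ 2 = (1 - s * ‖x‖) * (1 + s * ‖x‖) by ring,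
    ← div_div, show ‖x‖ + s * ‖x‖ ^ 2 = ‖x‖ * (1 + s * ‖x‖) by ring]
  field_simp

theorem ContinuousOn.F1 {α : Type*} [TopologicalSpace α] {f g : α → EuclideanSpace ℝ (Fin n)}
    {s : Set α} (hf : ContinuousOn f s) (hg : ContinuousOn g s) (hfs : ∀ t ∈ s, ‖f t‖ < 1) :
    ContinuousOn (fun t => F1 n (f t) (g t)) s := by
  refine ContinuousOn.div (by fun_prop) (by fun_prop) fun t ht => ?_
  nlinarith [norm_nonneg (f t), hfs t ht]

end FunkMetric

theorem sub_le_integral_of_partition {μ : Measure ℝ} {f G : ℝ → ℝ} :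
    ∀ {k : ℕ} {t : Fin (k + 1) → ℝ},
      (∀ i : Fin k, IntervalIntegrable f μ (t i.castSucc) (t i.succ) ∧
        G (t i.succ) - G (t i.castSucc) ≤ ∫ s in t i.castSucc..t i.succ, f s ∂μ) →
      IntervalIntegrable f μ (t 0) (t (Fin.last k)) ∧
        G (t (Fin.last k)) - G (t 0) ≤ ∫ s in t 0..t (Fin.last k), f s ∂μ
  | 0, t, _ => by rw [show Fin.last 0 = 0 from rfl]; simp
  | k + 1, t, h => by
    obtain ⟨hint, hle⟩ := sub_le_integral_of_partition (t := t ∘ Fin.castSucc) fun i => by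
      simpa only [Fin.succ_castSucc, Function.comp_apply] using h i.castSucc
    obtain ⟨hint', hle'⟩ := h (Fin.last k)
    simp only [Function.comp_apply, Fin.castSucc_zero] at hint hle
    rw [Fin.succ_last] at hint' hle'
    refine ⟨hint.trans hint', ?_⟩
    rw [← intervalIntegral.integral_add_adjacent_intervals hint hint']
    linarith

section Curves

variable {n : ℕ} {σ : ℝ → EuclideanSpace ℝ (Fin n)} {a b : ℝ}

theorem ContDiffOn.integrableOn_F1_deriv (hab : a < b) (hσ : ContDiffOn ℝ 1 σ (Icc a b))
    (hball : ∀ t ∈ Icc a b, ‖σ t‖ < 1) :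
    IntegrableOn (fun t => F1 n (σ t) (deriv σ t)) (Icc a b) := by
  have hderiv : ContinuousOn (derivWithin σ (Icc a b)) (Icc a b) :=
    hσ.continuousOn_derivWithin (uniqueDiffOn_Icc hab) le_rfl
  have hcont : ContinuousOn (fun t => F1 n (σ t) (derivWithin σ (Icc a b) t)) (Icc a b) :=
    hσ.continuousOn.F1 hderiv hball
  have heq : EqOn (fun t => F1 n (σ t) (derivWithin σ (Icc a b) t))
      (fun t => F1 n (σ t) (deriv σ t)) (Ioo a b) := fun t ht => by
    simp only [derivWithin_of_mem_nhds (Icc_mem_nhds ht.1 ht.2)]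
  rw [integrableOn_Icc_iff_integrableOn_Ioo]
  exact (hcont.integrableOn_Icc.mono_set Ioo_subset_Icc_self).congr_fun heq measurableSet_Ioo

theorem ContDiffOn.neg_log_one_sub_norm_sub_le_integral_F1 (hab : a < b)
    (hσ : ContDiffOn ℝ 1 σ (Icc a b)) (hball : ∀ t ∈ Icc a b, ‖σ t‖ < 1) :
    -Real.log (1 - ‖σ b‖) - -Real.log (1 - ‖σ a‖) ≤ ∫ t in a..b, F1 n (σ t) (deriv σ t) := by
  refine intervalIntegral.sub_le_integral_of_hasDeriv_right_of_le hab.le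
    ((continuousOn_const.sub hσ.continuousOn.norm).log
      fun t ht => (sub_pos.2 (hball t ht)).ne').neg
    (fun t ht => ?_) (hσ.integrableOn_F1_deriv hab hball)
    fun t ht => radialSpeed_div_le_F1 _ (hball t (Ioo_subset_Icc_self ht))
  have hσt : HasDerivAt σ (deriv σ t) t :=
    (((hσ.differentiableOn one_ne_zero) t (Ioo_subset_Icc_self ht)).differentiableAt
      (Icc_mem_nhds ht.1 ht.2)).hasDerivAt
  exact hσt.hasDerivWithinAt.neg_log_one_sub_norm_Ioi (hball t (Ioo_subset_Icc_self ht)).ne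

theorem PiecewiseC1On.neg_log_one_sub_norm_sub_le_integral_F1 (hσ : PiecewiseC1On n σ)
    (hball : ∀ t ∈ Icc (0 : ℝ) 1, ‖σ t‖ < 1) :
    -Real.log (1 - ‖σ 1‖) - -Real.log (1 - ‖σ 0‖) ≤
      ∫ t in (0 : ℝ)..1, F1 n (σ t) (deriv σ t) := by
  obtain ⟨-, k, t, hmono, ht0, ht1, hC1⟩ := hσ
  have hmem : ∀ i, t i ∈ Icc (0 : ℝ) 1 := fun i =>
    ⟨ht0 ▸ hmono.monotone (Fin.zero_le i), ht1 ▸ hmono.monotone (Fin.le_last i)⟩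
  have hpiece : ∀ i : Fin k, ∀ s ∈ Icc (t i.castSucc) (t i.succ), ‖σ s‖ < 1 := fun i s hs =>
    hball s (Icc_subset_Icc (hmem _).1 (hmem _).2 hs)
  have hab : ∀ i : Fin k, t i.castSucc < t i.succ := fun i => hmono Fin.castSucc_lt_succ
  have := (sub_le_integral_of_partition (G := fun s => -Real.log (1 - ‖σ s‖)) fun i =>
    ⟨(intervalIntegrable_iff_integrableOn_Icc_of_le (hab i).le).mpr
      ((hC1 i).integrableOn_F1_deriv (hab i) (hpiece i)),
      (hC1 i).neg_log_one_sub_norm_sub_le_integral_F1 (hab i) (hpiece i)⟩).2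
  rwa [ht0, ht1] at this

theorem ContDiff.piecewiseC1On (hσ : ContDiff ℝ 1 σ) : PiecewiseC1On n σ :=
  ⟨hσ.continuous.continuousOn, 1, ![0, 1], by simp [Fin.strictMono_iff_lt_succ], rfl, rfl,
    fun _ => hσ.contDiffOn⟩

theorem integral_F1_segment {x : EuclideanSpace ℝ (Fin n)} (hx : ‖x‖ < 1) :
    ∫ s in (0 : ℝ)..1, F1 n (s • x) (deriv (fun u : ℝ => u • x) s) = -Real.log (1 - ‖x‖) := by
  have hpos : ∀ s ∈ uIcc (0 : ℝ) 1, 0 < 1 - s * ‖x‖ := fun s hs => by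
    rw [uIcc_of_le zero_le_one] at hs
    nlinarith [hs.2, norm_nonneg x]
  have hF : EqOn (fun s => F1 n (s • x) (deriv (fun u : ℝ => u • x) s))
      (fun s => ‖x‖ / (1 - s * ‖x‖)) (uIcc 0 1) := fun s hs => by
    rw [uIcc_of_le zero_le_one] at hs
    have hd : deriv (fun u : ℝ => u • x) s = x := by
      simpa using ((hasDerivAt_id s).smul_const x).deriv
    simp only [hd, F1_smul_self x hs.1]
  have hderiv : ∀ s ∈ uIcc (0 : ℝ) 1,
      HasDerivAt (fun u : ℝ => -Real.log (1 - u * ‖x‖)) (‖x‖ / (1 - s * ‖x‖)) s := fun s hs =>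
    (((hasDerivAt_mul_const ‖x‖).const_sub 1).log (hpos s hs).ne').neg.congr_deriv (by ring)
  rw [intervalIntegral.integral_congr hF, intervalIntegral.integral_eq_sub_of_hasDerivAt hderiv
    (continuousOn_const.div (by fun_prop) fun s hs => (hpos s hs).ne').intervalIntegrable]
  simp

end Curves

theorem stmt_8_general (n : ℕ)
    (x : EuclideanSpace ℝ (Fin n)) (hx : x ∈ ball (0 : EuclideanSpace ℝ (Fin n)) 1) :
    IsGLB {L : ℝ | ∃ σ : ℝ → EuclideanSpace ℝ (Fin n), PiecewiseC1On n σ ∧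
        (∀ t ∈ Set.Icc (0 : ℝ) 1, σ t ∈ ball (0 : EuclideanSpace ℝ (Fin n)) 1) ∧
        σ 0 = 0 ∧ σ 1 = x ∧ L = ∫ t in (0 : ℝ)..1, F1 n (σ t) (deriv σ t)}
      (-Real.log (1 - ‖x‖)) := by
  have hx1 : ‖x‖ < 1 := mem_ball_zero_iff.mp hx
  refine IsLeast.isGLB ⟨⟨fun s => s • x, (contDiff_id.smul contDiff_const).piecewiseC1On,
    fun s hs => ?_, zero_smul _ _, one_smul _ _, (integral_F1_segment hx1).symm⟩, ?_⟩
  · rw [mem_ball_zero_iff, norm_smul, Real.norm_of_nonneg hs.1]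
    nlinarith [hs.2, norm_nonneg x]
  · rintro _ ⟨σ, hσ, hball, h0, h1, rfl⟩
    simpa [h0, h1] using
      hσ.neg_log_one_sub_norm_sub_le_integral_F1 fun t ht => mem_ball_zero_iff.mp (hball t ht)

theorem stmt_8 (n : ℕ) (hn : 2 ≤ n)
    (x : EuclideanSpace ℝ (Fin n)) (hx : x ∈ ball (0 : EuclideanSpace ℝ (Fin n)) 1) :
    IsGLB {L : ℝ | ∃ σ : ℝ → EuclideanSpace ℝ (Fin n), PiecewiseC1On n σ ∧
        (∀ t ∈ Set.Icc (0 : ℝ) 1, σ t ∈ ball (0 : EuclideanSpace ℝ (Fin n)) 1) ∧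
        σ 0 = 0 ∧ σ 1 = x ∧ L = ∫ t in (0 : ℝ)..1, F1 n (σ t) (deriv σ t)}
      (-Real.log (1 - ‖x‖)) :=
  stmt_8_general n x hx
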